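/- arXiv:1301.1148 — 2 statements merged into one kernel-verified Lean document; each statement's English description precedes it below -/
import Mathlib

section
/- Let n ≥ 2 be an integer, κ < 0 a real number, ω_n > 0 a constant, and let V : (0, ∞) → (0, ∞) be a differentiable function such that Q(s) := V(s)/B^κ_n(s) is non-decreasing on (0, ∞). Then for every R > 0, the weighted Rayleigh quotient of the test function f_R satisfies ∫_{R/2}^{R} f_R'(s)²·V'(s) ds / ∫_{R/2}^{R} f_R(s)²·V'(s) ds ≤ (Q(R)/Q(R/2))·[ (4·B^κ_n(R)/(R·S^κ_n(R)))·F(R)·(ln Q(R) − ln Q(R/2)) + Λ(R) ], where F(R) = ((n−1)²/4)·Ct_κ(R/2)² + 4π²/R² + (2(n−1)π/R)·Ct_κ(R/2) and Λ(R) = ((n−1)²/4)·Ct_κ(R/2)² + 8π²/R² + (4π(n−1)/R)·Ct_κ(R/2). -/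
/-!
Write `θ = 2π(s - R/2)/R`, `S = S^κ_n`, `B = B^κ_n`. Then `V' = Q' B + Q S` and
`(f_R')² S = ((2π/R) cos θ - ((n-1)/2) Ct_κ(s) sin θ)²`. As `Ct_κ` decreases, this is at most
`(2π/R)² cos² θ + c² sin² θ + (2π/R) c ≤ F(R)` with `c = ((n-1)/2) Ct_κ(R/2)`.
Since `log S` is concave and `S(0) = 0`, `B/S` is nondecreasing, so the `Q' B` part of the
numerator is at most `F(R) (B(R)/S(R)) Q(R) ∫ Q'/Q`, and `∫ Q'/Q = ln Q(R) - ln Q(R/2)`; the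
`Q S` part is at most `Q(R) ∫ ((2π/R)² cos² θ + c² sin² θ + (2π/R) c) = Q(R) (R/4) F(R)`,
and `F ≤ Λ`.
The denominator is at least `Q(R/2) ∫ sin² θ = Q(R/2) R/4`.
-/

open Real Set

theorem antitoneOn_mul_cosh_div_sinh {c : ℝ} (hc : 0 < c) :
    AntitoneOn (fun t => c * (cosh (c * t) / sinh (c * t))) (Ioi 0) := by
  intro x hx y hy hxy
  have hsx : 0 < sinh (c * x) := sinh_pos_iff.2 (mul_pos hc hx)
  have hsy : 0 < sinh (c * y) := sinh_pos_iff.2 (mul_pos hc hy)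
  have hxy' : 0 ≤ sinh (c * y - c * x) := sinh_nonneg_iff.2 (by nlinarith)
  rw [sinh_sub] at hxy'
  refine mul_le_mul_of_nonneg_left ?_ hc.le
  rw [div_le_div_iff₀ hsy hsx]
  linarith

theorem hasDerivAt_const_mul_sinh_div_pow {c ω t : ℝ} (m : ℕ) (hc : c ≠ 0)
    (ht : sinh (c * t) ≠ 0) :
    HasDerivAt (fun t => ω * (sinh (c * t) / c) ^ m)
      (m * (c * (cosh (c * t) / sinh (c * t))) * (ω * (sinh (c * t) / c) ^ m)) t := by
  have hS : HasDerivAt (fun t => sinh (c * t) / c) (cosh (c * t)) t := by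
    simpa [hc] using (((hasDerivAt_id t).const_mul c).sinh).div_const c
  refine ((hS.pow m).const_mul ω).congr_deriv ?_
  rcases m with _ | m
  · simp
  · rw [add_tsub_cancel_right, pow_succ]
    field_simp

section LogConcave

variable {φ h : ℝ → ℝ}

theorem mul_integral_le_of_antitoneOn {s : ℝ} (hs : 0 < s) (hφc : Continuous φ) (hφ0 : φ 0 = 0)
    (hφ : ∀ t > 0, 0 ≤ φ t) (hφd : ∀ t > 0, HasDerivAt φ (h t * φ t) t)
    (hh : AntitoneOn h (Ioi 0)) :
    h s * ∫ t in 0..s, φ t ≤ φ s := by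
  rw [← intervalIntegral.integral_const_mul]
  have := intervalIntegral.integral_le_sub_of_hasDeriv_right_of_le hs.le hφc.continuousOn
    (fun t ht => (hφd t ht.1).hasDerivWithinAt) (continuous_const.mul hφc).integrableOn_Icc
    (fun t ht => mul_le_mul_of_nonneg_right (hh ht.1 hs ht.2.le) (hφ t ht.1))
  rwa [hφ0, sub_zero] at this

theorem monotoneOn_integral_div_of_antitoneOn (hφc : Continuous φ) (hφ0 : φ 0 = 0)
    (hφ : ∀ t > 0, 0 < φ t) (hφd : ∀ t > 0, HasDerivAt φ (h t * φ t) t)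
    (hh : AntitoneOn h (Ioi 0)) :
    MonotoneOn (fun s => (∫ t in 0..s, φ t) / φ s) (Ioi 0) := by
  have hB : ∀ s, HasDerivAt (fun s => ∫ t in 0..s, φ t) (φ s) s := fun s =>
    intervalIntegral.integral_hasDerivAt_right (hφc.intervalIntegrable _ _)
      hφc.aestronglyMeasurable.stronglyMeasurableAtFilter hφc.continuousAt
  have hd : ∀ s > 0, HasDerivAt (fun s => (∫ t in 0..s, φ t) / φ s)
      ((φ s - h s * ∫ t in 0..s, φ t) / φ s) s := fun s hs =>
    ((hB s).div (hφd s hs) (hφ s hs).ne').congr_deriv (by field_simp)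
  refine monotoneOn_of_hasDerivWithinAt_nonneg
    (f' := fun s => (φ s - h s * ∫ t in 0..s, φ t) / φ s) (convex_Ioi 0)
    (fun s hs => (hd s hs).continuousAt.continuousWithinAt) ?_ ?_ <;> rw [interior_Ioi]
  · exact fun s hs => (hd s hs).hasDerivWithinAt
  · exact fun s hs => div_nonneg
      (sub_nonneg.2 (mul_integral_le_of_antitoneOn hs hφc hφ0 (fun t ht => (hφ t ht).le) hφd hh))
      (hφ s hs).le

end LogConcave

theorem intervalIntegral.integral_mono_on_of_nonneg {f g : ℝ → ℝ} {a b : ℝ} (hab : a ≤ b)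
    (hg : IntervalIntegrable g MeasureTheory.volume a b) (hf : ∀ x ∈ Icc a b, 0 ≤ f x)
    (hfg : ∀ x ∈ Icc a b, f x ≤ g x) : ∫ x in a..b, f x ≤ ∫ x in a..b, g x := by
  by_cases hfi : IntervalIntegrable f MeasureTheory.volume a b
  · exact integral_mono_on hab hfi hg hfg
  · rw [integral_undef hfi]
    exact integral_nonneg hab fun x hx => (hf x hx).trans (hfg x hx)

theorem intervalIntegral.integral_deriv_div_self {g g' : ℝ → ℝ} {a b : ℝ} (hab : a ≤ b)
    (hg : ∀ s ∈ Icc a b, 0 < g s) (hgd : ∀ s ∈ Icc a b, HasDerivAt g (g' s) s)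
    (hg' : ∀ s ∈ Icc a b, 0 ≤ g' s) :
    IntervalIntegrable (fun s => g' s / g s) MeasureTheory.volume a b ∧
      ∫ s in a..b, g' s / g s = log (g b) - log (g a) := by
  have hlog : ∀ s ∈ uIcc a b, HasDerivAt (fun s => log (g s)) (g' s / g s) s := by
    rw [uIcc_of_le hab]
    exact fun s hs => (hgd s hs).log (hg s hs).ne'
  have hint : IntervalIntegrable (fun s => g' s / g s) MeasureTheory.volume a b := by
    refine intervalIntegrable_deriv_of_nonneg (g := fun s => log (g s))
      (fun s hs => (hlog s hs).continuousAt.continuousWithinAt)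
      (fun s hs => hlog s (Ioo_subset_Icc_self hs)) fun s hs => ?_
    rw [min_eq_left hab, max_eq_right hab] at hs
    exact div_nonneg (hg' s (Ioo_subset_Icc_self hs)) (hg s (Ioo_subset_Icc_self hs)).le
  exact ⟨hint, integral_eq_sub_of_hasDerivAt hlog hint⟩

theorem sq_mul_cos_sub_mul_sin_le {k β c t : ℝ} (hk : 0 ≤ k) (hβ : 0 ≤ β) (hβc : β ≤ c) :
    (k * cos t - β * sin t) ^ 2 ≤ k ^ 2 * cos t ^ 2 + c ^ 2 * sin t ^ 2 + k * c := by
  have hβc2 : β ^ 2 * sin t ^ 2 ≤ c ^ 2 * sin t ^ 2 :=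
    mul_le_mul_of_nonneg_right (pow_le_pow_left₀ hβ hβc 2) (sq_nonneg _)
  calc (k * cos t - β * sin t) ^ 2
      = k ^ 2 * cos t ^ 2 + β ^ 2 * sin t ^ 2 + k * β - k * β * (sin t + cos t) ^ 2 := by
        linear_combination (k * β) * sin_sq_add_cos_sq t
    _ ≤ k ^ 2 * cos t ^ 2 + c ^ 2 * sin t ^ 2 + k * c := by
        linarith [mul_nonneg (mul_nonneg hk hβ) (sq_nonneg (sin t + cos t)),
          mul_le_mul_of_nonneg_left hβc hk]

section HalfWave

variable {a b : ℝ}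

theorem integral_sin_sq_halfWave (hab : a ≠ b) :
    ∫ s in a..b, sin (π * (s - a) / (b - a)) ^ 2 = (b - a) / 2 := by
  have hba : b - a ≠ 0 := sub_ne_zero.2 hab.symm
  have h := intervalIntegral.integral_comp_mul_sub (a := a) (b := b) (fun x => sin x ^ 2)
    (div_ne_zero pi_ne_zero hba) (π / (b - a) * a)
  have hb : π / (b - a) * b - π / (b - a) * a = π := by field_simp
  simp only [sub_self, hb, integral_sin_sq, sin_zero, sin_pi, smul_eq_mul] at h
  convert h using 1
  · congr 1; ext s; congr 2; ring
  · field_simp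
    ring

theorem integral_cos_sq_halfWave (hab : a ≠ b) :
    ∫ s in a..b, cos (π * (s - a) / (b - a)) ^ 2 = (b - a) / 2 := by
  simp_rw [cos_sq']
  rw [intervalIntegral.integral_sub (by simp) (Continuous.intervalIntegrable (by fun_prop) _ _),
    integral_sin_sq_halfWave hab]
  simp
  ring

theorem integral_mul_cos_sq_add_mul_sin_sq_halfWave (hab : a ≠ b) (p q r : ℝ) :
    ∫ s in a..b, (p * cos (π * (s - a) / (b - a)) ^ 2 + q * sin (π * (s - a) / (b - a)) ^ 2 + r) =
      (b - a) / 2 * (p + q + 2 * r) := by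
  rw [intervalIntegral.integral_add, intervalIntegral.integral_add,
    intervalIntegral.integral_const_mul, intervalIntegral.integral_const_mul,
    integral_cos_sq_halfWave hab, integral_sin_sq_halfWave hab, intervalIntegral.integral_const,
    smul_eq_mul]
  · ring
  all_goals apply Continuous.intervalIntegrable; fun_prop

end HalfWave

theorem hasDerivAt_sin_div_sqrt {u φ : ℝ → ℝ} {k η x : ℝ} (hu : HasDerivAt u k x)
    (hφ : HasDerivAt φ (η * φ x) x) (hpos : 0 < φ x) :
    HasDerivAt (fun s => sin (u s) / √(φ s))
      ((k * cos (u x) - η / 2 * sin (u x)) / √(φ x)) x := by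
  have hsqrt : HasDerivAt (fun s => √(φ s)) (η / 2 * √(φ x)) x := by
    refine ((hasDerivAt_sqrt hpos.ne').comp x hφ).congr_deriv ?_
    field_simp
    rw [sq_sqrt hpos.le, mul_comm]
  refine (hu.sin.div hsqrt (sqrt_pos.2 hpos).ne').congr_deriv ?_
  field_simp

theorem hasDerivAt_of_eq_div {V B Q : ℝ → ℝ} {b s : ℝ} (hBd : HasDerivAt B b s) (hB : B s ≠ 0)
    (hVd : DifferentiableAt ℝ V s) (hQ : ∀ t, Q t = V t / B t) :
    HasDerivAt V (deriv Q s * B s + Q s * b) s := by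
  obtain rfl : Q = fun t => V t / B t := funext hQ
  have hQd := (hVd.hasDerivAt.div hBd hB).differentiableAt.hasDerivAt
  refine (hQd.mul hBd).congr_of_eventuallyEq ?_
  filter_upwards [hBd.continuousAt.eventually_ne hB] with t ht
  exact (div_mul_cancel₀ _ ht).symm

theorem MonotoneOn.deriv_nonneg_of_isOpen {f : ℝ → ℝ} {s : Set ℝ} {x : ℝ} (hf : MonotoneOn f s)
    (hs : IsOpen s) (hx : x ∈ s) : 0 ≤ deriv f x := by
  rw [← derivWithin_of_isOpen hs hx]
  exact hf.derivWithin_nonneg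

/-- Abstracts `φ = S^κ_n`, its logarithmic derivative `h = (n - 1) Ct_κ`, and `B = B^κ_n`. -/
structure LogConcaveDensity (φ h B : ℝ → ℝ) : Prop where
  pos : ∀ s > 0, 0 < φ s
  hasDerivAt : ∀ s > 0, HasDerivAt φ (h s * φ s) s
  logDeriv_nonneg : ∀ s > 0, 0 ≤ h s
  antitoneOn_logDeriv : AntitoneOn h (Ioi 0)
  hasDerivAt_primitive : ∀ s > 0, HasDerivAt B (φ s) s
  primitive_pos : ∀ s > 0, 0 < B s
  monotoneOn_primitive_div : MonotoneOn (fun s => B s / φ s) (Ioi 0)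

/-- The first Dirichlet eigenfunction of `[a, b]`, divided by `√φ`. -/
noncomputable def sineTest (φ : ℝ → ℝ) (a b s : ℝ) : ℝ :=
  sin (π * (s - a) / (b - a)) / √(φ s)

theorem hasDerivAt_sineTest {φ : ℝ → ℝ} {a b η s : ℝ} (hφ : HasDerivAt φ (η * φ s) s)
    (hpos : 0 < φ s) :
    HasDerivAt (sineTest φ a b)
      ((π / (b - a) * cos (π * (s - a) / (b - a)) - η / 2 * sin (π * (s - a) / (b - a))) /
        √(φ s)) s := by
  have hθ : HasDerivAt (fun s => π * (s - a) / (b - a)) (π / (b - a)) s := by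
    simpa using (((hasDerivAt_id s).sub_const a).const_mul π).div_const (b - a)
  exact hasDerivAt_sin_div_sqrt hθ hφ hpos

section Rayleigh

variable {φ h B V Q : ℝ → ℝ} {a b : ℝ}

theorem deriv_sineTest_sq_mul_le (hw : LogConcaveDensity φ h B) (ha : 0 < a) (hab : a < b)
    {s : ℝ} (hs : s ∈ Icc a b) (hQs : 0 < Q s) (hQsb : Q s ≤ Q b) (hQ's : 0 ≤ deriv Q s)
    (hV's : deriv V s = deriv Q s * B s + Q s * φ s) :
    deriv (sineTest φ a b) s ^ 2 * deriv V s ≤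
      (π / (b - a) + h a / 2) ^ 2 * (B b / φ b) * Q b * (deriv Q s / Q s) +
        Q b * ((π / (b - a)) ^ 2 * cos (π * (s - a) / (b - a)) ^ 2 +
          (h a / 2) ^ 2 * sin (π * (s - a) / (b - a)) ^ 2 + π / (b - a) * (h a / 2)) := by
  set k := π / (b - a)
  set c := h a / 2
  set θ := π * (s - a) / (b - a)
  set w := k * cos θ - h s / 2 * sin θ
  set P := k ^ 2 * cos θ ^ 2 + c ^ 2 * sin θ ^ 2 + k * c
  have hs0 : 0 < s := ha.trans_le hs.1
  have hb0 : 0 < b := ha.trans hab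
  have hφs := hw.pos s hs0
  have hρ0 : 0 ≤ B s / φ s := (div_pos (hw.primitive_pos s hs0) hφs).le
  have hρ : B s / φ s ≤ B b / φ b := hw.monotoneOn_primitive_div hs0 hb0 hs.2
  have hk : 0 ≤ k := div_nonneg pi_pos.le (sub_nonneg.2 hab.le)
  have hwP : w ^ 2 ≤ P := sq_mul_cos_sub_mul_sin_le hk (by linarith [hw.logDeriv_nonneg s hs0])
    (div_le_div_of_nonneg_right (hw.antitoneOn_logDeriv ha hs0 hs.1) two_pos.le)
  have hc : 0 ≤ c := div_nonneg (hw.logDeriv_nonneg a ha) two_pos.le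
  have hPK : P ≤ (k + c) ^ 2 := by
    simp only [P]
    nlinarith [cos_sq_le_one θ, sin_sq_le_one θ, mul_nonneg hk hc]
  have hQ'le : deriv Q s ≤ Q b * (deriv Q s / Q s) := calc
    deriv Q s = Q s * (deriv Q s / Q s) := by field_simp
    _ ≤ Q b * (deriv Q s / Q s) := by gcongr
  have hf' : deriv (sineTest φ a b) s ^ 2 * deriv V s =
      w ^ 2 * (B s / φ s) * deriv Q s + w ^ 2 * Q s := by
    rw [(hasDerivAt_sineTest (hw.hasDerivAt s hs0) hφs).deriv, hV's, div_pow, sq_sqrt hφs.le]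
    field_simp
    ring
  calc deriv (sineTest φ a b) s ^ 2 * deriv V s
      = w ^ 2 * (B s / φ s) * deriv Q s + w ^ 2 * Q s := hf'
    _ ≤ (k + c) ^ 2 * (B b / φ b) * (Q b * (deriv Q s / Q s)) + P * Q b :=
      add_le_add (mul_le_mul (mul_le_mul (hwP.trans hPK) hρ hρ0 (sq_nonneg _)) hQ'le hQ's
        (mul_nonneg (sq_nonneg _) (hρ0.trans hρ)))
        (mul_le_mul hwP hQsb hQs.le ((sq_nonneg _).trans hwP))
    _ = _ := by ring

theorem integral_deriv_sineTest_sq_mul_le (hw : LogConcaveDensity φ h B) (ha : 0 < a)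
    (hab : a < b) (hV : ∀ s > 0, 0 < V s) (hVd : ∀ s > 0, DifferentiableAt ℝ V s)
    (hQ : ∀ s, Q s = V s / B s) (hQ_mono : MonotoneOn Q (Ioi 0)) :
    ∫ s in a..b, deriv (sineTest φ a b) s ^ 2 * deriv V s ≤
      Q b * (π / (b - a) + h a / 2) ^ 2 *
        (B b / φ b * (log (Q b) - log (Q a)) + (b - a) / 2) := by
  set k := π / (b - a)
  set c := h a / 2
  set θ := fun s => π * (s - a) / (b - a)
  have hpos : ∀ s ∈ Icc a b, 0 < s := fun s hs => ha.trans_le hs.1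
  have hQpos : ∀ s > 0, 0 < Q s := fun s hs =>
    hQ s ▸ div_pos (hV s hs) (hw.primitive_pos s hs)
  have hQ' : ∀ s > 0, 0 ≤ deriv Q s := fun s hs => hQ_mono.deriv_nonneg_of_isOpen isOpen_Ioi hs
  have hQd : ∀ s > 0, HasDerivAt Q (deriv Q s) s := fun s hs => by
    rw [show Q = V / B from funext hQ]
    exact ((hVd s hs).div (hw.hasDerivAt_primitive s hs).differentiableAt
      (hw.primitive_pos s hs).ne').hasDerivAt
  have hV' : ∀ s > 0, deriv V s = deriv Q s * B s + Q s * φ s := fun s hs =>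
    (hasDerivAt_of_eq_div (hw.hasDerivAt_primitive s hs) (hw.primitive_pos s hs).ne'
      (hVd s hs) hQ).deriv
  obtain ⟨hlog_int, hlog⟩ := intervalIntegral.integral_deriv_div_self hab.le
    (fun s hs => hQpos s (hpos s hs)) (fun s hs => hQd s (hpos s hs))
    (fun s hs => hQ' s (hpos s hs))
  have hP_int : IntervalIntegrable (fun s => k ^ 2 * cos (θ s) ^ 2 + c ^ 2 * sin (θ s) ^ 2 + k * c)
      MeasureTheory.volume a b := by
    apply Continuous.intervalIntegrable; fun_prop
  have hnonneg : ∀ s ∈ Icc a b, 0 ≤ deriv (sineTest φ a b) s ^ 2 * deriv V s := fun s hs => by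
    have hs0 := hpos s hs
    rw [hV' s hs0]
    have := hQ' s hs0; have := hw.primitive_pos s hs0; have := hQpos s hs0; have := hw.pos s hs0
    positivity
  calc ∫ s in a..b, deriv (sineTest φ a b) s ^ 2 * deriv V s
      ≤ ∫ s in a..b, ((k + c) ^ 2 * (B b / φ b) * Q b * (deriv Q s / Q s) +
          Q b * (k ^ 2 * cos (θ s) ^ 2 + c ^ 2 * sin (θ s) ^ 2 + k * c)) :=
        intervalIntegral.integral_mono_on_of_nonneg hab.le
          ((hlog_int.const_mul _).add (hP_int.const_mul _)) hnonneg fun s hs =>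
            deriv_sineTest_sq_mul_le hw ha hab hs (hQpos s (hpos s hs))
              (hQ_mono (hpos s hs) (ha.trans hab) hs.2) (hQ' s (hpos s hs)) (hV' s (hpos s hs))
    _ = Q b * (k + c) ^ 2 * (B b / φ b * (log (Q b) - log (Q a)) + (b - a) / 2) := by
      rw [intervalIntegral.integral_add (hlog_int.const_mul _) (hP_int.const_mul _),
        intervalIntegral.integral_const_mul, intervalIntegral.integral_const_mul, hlog,
        integral_mul_cos_sq_add_mul_sin_sq_halfWave hab.ne]
      ring

theorem le_integral_sineTest_sq_mul (hw : LogConcaveDensity φ h B) (ha : 0 < a) (hab : a < b)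
    (hV : ∀ s > 0, 0 < V s) (hVd : ∀ s > 0, DifferentiableAt ℝ V s)
    (hQ : ∀ s, Q s = V s / B s) (hQ_mono : MonotoneOn Q (Ioi 0)) :
    Q a * ((b - a) / 2) ≤ ∫ s in a..b, sineTest φ a b s ^ 2 * deriv V s := by
  have hpos : ∀ s ∈ uIcc a b, 0 < s := fun s hs => ha.trans_le (uIcc_of_le hab.le ▸ hs).1
  have hQpos : ∀ s > 0, 0 < Q s := fun s hs =>
    hQ s ▸ div_pos (hV s hs) (hw.primitive_pos s hs)
  have hV' : ∀ s > 0, deriv V s = deriv Q s * B s + Q s * φ s := fun s hs =>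
    (hasDerivAt_of_eq_div (hw.hasDerivAt_primitive s hs) (hw.primitive_pos s hs).ne'
      (hVd s hs) hQ).deriv
  have hV'_nonneg : ∀ s > 0, 0 ≤ deriv V s := fun s hs => by
    rw [hV' s hs]
    have := hQ_mono.deriv_nonneg_of_isOpen isOpen_Ioi hs
    have := hw.primitive_pos s hs; have := hQpos s hs; have := hw.pos s hs
    positivity
  have hV'_int : IntervalIntegrable (deriv V) MeasureTheory.volume a b := by
    refine intervalIntegral.intervalIntegrable_deriv_of_nonneg
      (fun s hs => (hVd s (hpos s hs)).continuousAt.continuousWithinAt)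
      (fun s hs => (hVd s (hpos s (Ioo_subset_Icc_self hs))).hasDerivAt)
      (fun s hs => hV'_nonneg s (hpos s (Ioo_subset_Icc_self hs)))
  have hf_cont : ContinuousOn (fun s => sineTest φ a b s ^ 2) (uIcc a b) := fun s hs =>
    have hφc := (hw.hasDerivAt s (hpos s hs)).continuousAt
    (((by fun_prop : Continuous fun s => sin (π * (s - a) / (b - a))).continuousAt.div
      (continuous_sqrt.continuousAt.comp hφc) (sqrt_pos.2 (hw.pos s (hpos s hs))).ne').pow
      2).continuousWithinAt
  have hpt : ∀ s ∈ Icc a b, Q a * sin (π * (s - a) / (b - a)) ^ 2 ≤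
      sineTest φ a b s ^ 2 * deriv V s := by
    intro s hs
    have hs0 : 0 < s := ha.trans_le hs.1
    have hφs := hw.pos s hs0
    have hQ's := hQ_mono.deriv_nonneg_of_isOpen isOpen_Ioi hs0
    have hB := hw.primitive_pos s hs0
    have hQas : Q a ≤ Q s := hQ_mono ha hs0 hs.1
    rw [sineTest, div_pow, sq_sqrt hφs.le, hV' s hs0, div_mul_eq_mul_div, le_div_iff₀ hφs]
    nlinarith [mul_nonneg (mul_nonneg (sq_nonneg (sin (π * (s - a) / (b - a)))) hQ's) hB.le,
      mul_nonneg (mul_nonneg (sq_nonneg (sin (π * (s - a) / (b - a)))) hφs.le) (sub_nonneg.2 hQas)]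
  calc Q a * ((b - a) / 2) = ∫ s in a..b, Q a * sin (π * (s - a) / (b - a)) ^ 2 := by
        rw [intervalIntegral.integral_const_mul, integral_sin_sq_halfWave hab.ne]
    _ ≤ ∫ s in a..b, sineTest φ a b s ^ 2 * deriv V s :=
        intervalIntegral.integral_mono_on hab.le
          (Continuous.intervalIntegrable (by fun_prop) _ _) (hV'_int.continuousOn_mul hf_cont) hpt

theorem rayleigh_sineTest_le (hw : LogConcaveDensity φ h B) (ha : 0 < a) (hab : a < b)
    (hV : ∀ s > 0, 0 < V s) (hVd : ∀ s > 0, DifferentiableAt ℝ V s)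
    (hQ : ∀ s, Q s = V s / B s) (hQ_mono : MonotoneOn Q (Ioi 0)) :
    (∫ s in a..b, deriv (sineTest φ a b) s ^ 2 * deriv V s) /
        (∫ s in a..b, sineTest φ a b s ^ 2 * deriv V s) ≤
      Q b / Q a * ((π / (b - a) + h a / 2) ^ 2 *
        (2 * B b / ((b - a) * φ b) * (log (Q b) - log (Q a)) + 1)) := by
  have hb : 0 < b := ha.trans hab
  have hQa : 0 < Q a := hQ a ▸ div_pos (hV a ha) (hw.primitive_pos a ha)
  have hlog : 0 ≤ log (Q b) - log (Q a) :=
    sub_nonneg.2 (log_le_log hQa (hQ_mono ha hb hab.le))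
  have hφb := hw.pos b hb
  have hBb := hw.primitive_pos b hb
  have hQb : 0 < Q b := hQ b ▸ div_pos (hV b hb) hBb
  have hba : 0 < b - a := sub_pos.2 hab
  refine (div_le_div₀ (by positivity)
    (integral_deriv_sineTest_sq_mul_le hw ha hab hV hVd hQ hQ_mono) (by positivity)
    (le_integral_sineTest_sq_mul hw ha hab hV hVd hQ hQ_mono)).trans_eq ?_
  field_simp

end Rayleigh

theorem logConcaveDensity_sinh_pow {c ω : ℝ} {n : ℕ} (hc : 0 < c) (hω : 0 < ω) (hn : 2 ≤ n) :
    LogConcaveDensity (fun t => ω * (sinh (c * t) / c) ^ (n - 1))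
      (fun t => ((n : ℝ) - 1) * (c * (cosh (c * t) / sinh (c * t))))
      (fun s => ∫ t in 0..s, ω * (sinh (c * t) / c) ^ (n - 1)) := by
  set φ := fun t => ω * (sinh (c * t) / c) ^ (n - 1)
  have hn1 : ((n - 1 : ℕ) : ℝ) = (n : ℝ) - 1 := by rw [Nat.cast_sub (by omega), Nat.cast_one]
  have hn1_nonneg : (0 : ℝ) ≤ (n : ℝ) - 1 := by rw [← hn1]; positivity
  have hpos : ∀ t > 0, 0 < φ t := fun t ht => by
    have := mul_pos hc ht
    positivity
  have hd : ∀ t > 0, HasDerivAt φ (((n : ℝ) - 1) * (c * (cosh (c * t) / sinh (c * t))) * φ t) t :=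
    fun t ht => hn1 ▸
      hasDerivAt_const_mul_sinh_div_pow _ hc.ne' (sinh_pos_iff.2 (mul_pos hc ht)).ne'
  have hanti : AntitoneOn (fun t => ((n : ℝ) - 1) * (c * (cosh (c * t) / sinh (c * t)))) (Ioi 0) :=
    fun x hx y hy hxy =>
      mul_le_mul_of_nonneg_left (antitoneOn_mul_cosh_div_sinh hc hx hy hxy) hn1_nonneg
  have hcont : Continuous φ := by fun_prop
  have hφ0 : φ 0 = 0 := by simp [φ, zero_pow (by omega : n - 1 ≠ 0)]
  refine ⟨hpos, hd, fun t ht => ?_, hanti, fun s _ => ?_, fun s hs => ?_,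
    monotoneOn_integral_div_of_antitoneOn hcont hφ0 hpos hd hanti⟩
  · have := mul_pos hc ht
    positivity
  · exact intervalIntegral.integral_hasDerivAt_right (hcont.intervalIntegrable _ _)
      hcont.aestronglyMeasurable.stronglyMeasurableAtFilter hcont.continuousAt
  · exact intervalIntegral.intervalIntegral_pos_of_pos_on (hcont.intervalIntegrable _ _)
      (fun x hx => hpos x hx.1) hs

open Real in
/-- For n ≥ 2, κ < 0, ω_n > 0, V : (0,∞) → (0,∞) differentiable
with Q(s) := V(s)/B^κ_n(s) non-decreasing on (0, ∞), and
f_R(s) = sin(2π(s − R/2)/R)/(S^κ_n(s))^{1/2}: for every R > 0,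
∫_{R/2}^{R} f_R'(s)²·V'(s) ds / ∫_{R/2}^{R} f_R(s)²·V'(s) ds
  ≤ (Q(R)/Q(R/2))·[(4·B^κ_n(R)/(R·S^κ_n(R)))·F(R)·(ln Q(R) − ln Q(R/2)) + Λ(R)],
with F(R) = ((n−1)²/4)·Ct_κ(R/2)² + 4π²/R² + (2(n−1)π/R)·Ct_κ(R/2) and
Λ(R) = ((n−1)²/4)·Ct_κ(R/2)² + 8π²/R² + (4π(n−1)/R)·Ct_κ(R/2). -/
theorem stmt_14 (n : ℕ) (hn : 2 ≤ n) (κ : ℝ) (hκ : κ < 0) (ω : ℝ) (hω : 0 < ω)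
    (S : ℝ → ℝ)
    (hS : ∀ t : ℝ, S t = Real.sinh (Real.sqrt (-κ) * t) / Real.sqrt (-κ))
    (Ct : ℝ → ℝ)
    (hCt : ∀ t : ℝ, Ct t =
        Real.sqrt (-κ) *
          (Real.cosh (Real.sqrt (-κ) * t) / Real.sinh (Real.sqrt (-κ) * t)))
    (Sn : ℝ → ℝ) (hSn : ∀ R : ℝ, Sn R = ω * (S R) ^ (n - 1))
    (Bn : ℝ → ℝ) (hBn : ∀ R : ℝ, Bn R = ∫ s in (0:ℝ)..R, Sn s)
    (V : ℝ → ℝ) (hVpos : ∀ s > (0:ℝ), 0 < V s)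
    (hVdiff : ∀ s > (0:ℝ), DifferentiableAt ℝ V s)
    (Q : ℝ → ℝ) (hQ : ∀ s : ℝ, Q s = V s / Bn s)
    (hQmono : MonotoneOn Q (Set.Ioi (0:ℝ)))
    (f : ℝ → ℝ → ℝ)
    (hf : ∀ R s : ℝ, f R s =
        Real.sin (2 * π * (s - R / 2) / R) / Real.sqrt (Sn s))
    (F : ℝ → ℝ)
    (hF : ∀ R : ℝ, F R =
        (((n : ℝ) - 1) ^ 2 / 4) * (Ct (R / 2)) ^ 2 + 4 * π ^ 2 / R ^ 2 +
          (2 * ((n : ℝ) - 1) * π / R) * Ct (R / 2))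
    (Λ : ℝ → ℝ)
    (hΛ : ∀ R : ℝ, Λ R =
        (((n : ℝ) - 1) ^ 2 / 4) * (Ct (R / 2)) ^ 2 + 8 * π ^ 2 / R ^ 2 +
          (4 * π * ((n : ℝ) - 1) / R) * Ct (R / 2)) :
    ∀ R > (0:ℝ),
      (∫ s in (R / 2)..R, (deriv (f R) s) ^ 2 * deriv V s) /
          (∫ s in (R / 2)..R, (f R s) ^ 2 * deriv V s) ≤
        (Q R / Q (R / 2)) *
          ((4 * Bn R / (R * Sn R)) * F R *
              (Real.log (Q R) - Real.log (Q (R / 2))) + Λ R) := by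
  intro R hR
  have hw : LogConcaveDensity Sn (fun t => ((n : ℝ) - 1) * Ct t) Bn := by
    have hSn_eq : Sn = fun t => ω * (sinh (√(-κ) * t) / √(-κ)) ^ (n - 1) :=
      funext fun t => by rw [hSn, hS]
    rw [show Bn = fun s => ∫ t in 0..s, Sn t from funext hBn, hSn_eq, funext hCt]
    exact logConcaveDensity_sinh_pow (sqrt_pos.2 (neg_pos.2 hκ)) hω hn
  have hQpos : ∀ s > 0, 0 < Q s := fun s hs => hQ s ▸ div_pos (hVpos s hs) (hw.primitive_pos s hs)
  have hfR : f R = sineTest Sn (R / 2) R := funext fun s => by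
    rw [hf, sineTest]; congr 2; field_simp; ring
  have hFR : F R = (π / (R - R / 2) + ((n : ℝ) - 1) * Ct (R / 2) / 2) ^ 2 := by
    rw [hF]; field_simp; ring
  have hFΛ : F R ≤ Λ R := by
    have : Λ R - F R = 4 * π ^ 2 / R ^ 2 + 2 * π / R * (((n : ℝ) - 1) * Ct (R / 2)) := by
      rw [hF, hΛ]; ring
    have := hw.logDeriv_nonneg (R / 2) (half_pos hR)
    linarith [show 0 ≤ 4 * π ^ 2 / R ^ 2 + 2 * π / R * (((n : ℝ) - 1) * Ct (R / 2)) by positivity]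
  have hX : 2 * Bn R / ((R - R / 2) * Sn R) = 4 * Bn R / (R * Sn R) := by
    have := hw.pos R hR
    field_simp; ring
  rw [hfR]
  refine (rayleigh_sineTest_le hw (half_pos hR) (half_lt_self hR) hVpos hVdiff hQ hQmono).trans
    (mul_le_mul_of_nonneg_left ?_ (div_nonneg (hQpos R hR).le (hQpos _ (half_pos hR)).le))
  rw [← hFR, hX]
  linarith
end

section
/- Let n ≥ 2 be an integer, κ < 0 a real number, ω_n > 0 a constant, C ≥ 1 a constant, and let V : (0, ∞) → (0, ∞) be a differentiable function such that Q(s) := V(s)/B^κ_n(s) is non-decreasing on (0, ∞) and Q(R)/Q(R/2) < C for all R > 0. Then limsup_{R → ∞} [ ∫_{R/2}^{R} f_R'(s)²·V'(s) ds / ∫_{R/2}^{R} f_R(s)²·V'(s) ds ] ≤ −C·(n−1)²·κ/4. -/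
/-!
Write `f_R = G / √S` with `G s = sin (2π (s - R/2) / R)`, `S = S^κ_n`, and `V = Q B` with
`B = B^κ_n`. For the weight `w = V' / S = Q + (B / S) Q'` one has `f_R² V' = G² w` and
`f_R'² V' = (G' - G S' / (2S))² w`. On `[R/2, R]` the log-derivative
`S' / (2S) = (n-1) √(-κ) coth (√(-κ) s) / 2` is at most
`M_R = (n-1) √(-κ) coth (√(-κ) R/2) / 2`, and `|G'| ≤ 2π/R`, so the numerator is at most
`M_R² · denominator + O(1/R) · ∫ w`. Since `(n-1) √(-κ) B ≤ S` we get
`∫ w ≤ Q(R) (R/2 + O(1))`, while the denominator is at least `Q(R/2) ∫ G² = Q(R/2) R/4`; the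
doubling bound `Q(R) ≤ C Q(R/2)` turns the error term into `O(C/R) · denominator`. Hence the
quotient is at most `M_R² + O(C/R) → (n-1)² (-κ) / 4`, which is at most `-C (n-1)² κ / 4` as
`C ≥ 1`.
-/

open Real Filter Set MeasureTheory intervalIntegral Topology

lemma integral_mono_on_Ioo_of_nonneg {f g : ℝ → ℝ} {a b : ℝ} (hab : a ≤ b)
    (hg : IntervalIntegrable g volume a b) (hf : ∀ x ∈ Ioo a b, 0 ≤ f x)
    (hfg : ∀ x ∈ Ioo a b, f x ≤ g x) :
    ∫ x in a..b, f x ≤ ∫ x in a..b, g x := by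
  rw [integral_of_le hab, integral_of_le hab, integral_Ioc_eq_integral_Ioo,
    integral_Ioc_eq_integral_Ioo]
  refine integral_mono_of_nonneg ?_ (hg.1.mono_set Ioo_subset_Ioc_self) ?_ <;>
    filter_upwards [ae_restrict_mem measurableSet_Ioo] with x hx
  exacts [hf x hx, hfg x hx]

lemma HasDerivAt.nonneg_of_monotoneOn_Icc {Q : ℝ → ℝ} {a b x q : ℝ} (hQ : HasDerivAt Q q x)
    (hmono : MonotoneOn Q (Icc a b)) (hx : x ∈ Ioo a b) : 0 ≤ q := by
  rw [← hQ.deriv, ← derivWithin_of_mem_nhds (Icc_mem_nhds hx.1 hx.2)]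
  exact hmono.derivWithin_nonneg

lemma mul_integral_le_sub_of_mul_le_deriv {F F' : ℝ → ℝ} {k a b : ℝ} (hab : a ≤ b)
    (hF : ∀ t ∈ Icc a b, HasDerivAt F (F' t) t) (hF' : IntervalIntegrable F' volume a b)
    (hle : ∀ t ∈ Icc a b, k * F t ≤ F' t) :
    k * ∫ t in a..b, F t ≤ F b - F a := by
  have hFc : ContinuousOn F (uIcc a b) := fun t ht =>
    (hF t (uIcc_of_le hab ▸ ht)).continuousAt.continuousWithinAt
  rw [← intervalIntegral.integral_const_mul, ← integral_eq_sub_of_hasDerivAt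
    (fun t ht => hF t (uIcc_of_le hab ▸ ht)) hF']
  exact integral_mono_on hab (hFc.intervalIntegrable.const_mul k) hF' hle

lemma hasDerivAt_div_sqrt {g h : ℝ → ℝ} {g' h' x : ℝ} (hg : HasDerivAt g g' x)
    (hh : HasDerivAt h h' x) (hx : 0 < h x) :
    HasDerivAt (fun t => g t / √(h t)) ((g' - g x * (h' / (2 * h x))) / √(h x)) x := by
  refine (hg.div (hh.sqrt hx.ne') (sqrt_pos.2 hx).ne').congr_deriv ?_
  field_simp
  rw [sq_sqrt hx.le]
  ring

lemma sq_sub_mul_le {x y A M ω₀ : ℝ} (hx : |x| ≤ 1) (hy : |y| ≤ ω₀) (hA : 0 ≤ A)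
    (hAM : A ≤ M) :
    (y - x * A) ^ 2 ≤ M ^ 2 * x ^ 2 + (ω₀ ^ 2 + 2 * ω₀ * M) := by
  have hxy : -(x * y) ≤ ω₀ := (neg_le_abs _).trans (by
    rw [abs_mul]; nlinarith [abs_nonneg x, abs_nonneg y])
  have hy2 : y ^ 2 ≤ ω₀ ^ 2 := sq_le_sq' (abs_le.1 hy).1 (abs_le.1 hy).2
  have hA2 : x ^ 2 * A ^ 2 ≤ x ^ 2 * M ^ 2 :=
    mul_le_mul_of_nonneg_left (pow_le_pow_left₀ hA hAM 2) (sq_nonneg x)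
  nlinarith [mul_le_mul_of_nonneg_right hxy hA,
    mul_le_mul_of_nonneg_left hAM ((abs_nonneg y).trans hy)]

lemma integral_sin_sq_half_period {R : ℝ} (hR : R ≠ 0) :
    ∫ s in R / 2..R, sin (2 * π * (s - R / 2) / R) ^ 2 = R / 4 := by
  have h : ∀ s, 2 * π * (s - R / 2) / R = 2 * π / R * s - π := fun s => by field_simp
  have h₁ : 2 * π / R * (R / 2) - π = 0 := by field_simp; ring
  have h₂ : 2 * π / R * R - π = π := by field_simp; ring
  simp_rw [h]
  rw [integral_comp_mul_sub (fun x => sin x ^ 2) (by positivity), integral_sin_sq, h₁, h₂]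
  simp only [inv_div, sin_zero, cos_zero, sin_pi, cos_pi, mul_one, mul_neg, neg_zero, sub_self,
    zero_add, sub_zero, smul_eq_mul]
  field_simp
  norm_num

noncomputable def coth (x : ℝ) : ℝ := cosh x / sinh x

lemma one_le_coth {x : ℝ} (hx : 0 < x) : 1 ≤ coth x :=
  (one_le_div (sinh_pos_iff.2 hx)).2 (sinh_lt_cosh x).le

lemma coth_le_coth {x y : ℝ} (hx : 0 < x) (hxy : x ≤ y) : coth y ≤ coth x := by
  have hsx := sinh_pos_iff.2 hx
  have hsy := sinh_pos_iff.2 (hx.trans_le hxy)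
  rw [coth, coth, div_le_div_iff₀ hsy hsx]
  nlinarith [sinh_sub y x, sinh_nonneg_iff.2 (sub_nonneg.2 hxy)]

lemma coth_eq (x : ℝ) : coth x = (1 + exp (-x) ^ 2) / (1 - exp (-x) ^ 2) := by
  have h : exp x * exp (-x) = 1 := by rw [← exp_add]; simp
  rw [coth, cosh_eq, sinh_eq, div_div_div_cancel_right₀ two_ne_zero,
    ← mul_div_mul_right _ _ (exp_pos (-x)).ne']
  congr 1 <;> linear_combination h

lemma tendsto_coth_atTop : Tendsto coth atTop (𝓝 1) := by
  have h := tendsto_exp_neg_atTop_nhds_zero.pow 2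
  have := (h.const_add 1).div (h.const_sub 1) (by norm_num)
  rw [show ((1 : ℝ) + 0 ^ 2) / (1 - 0 ^ 2) = 1 by norm_num] at this
  exact this.congr fun x => (coth_eq x).symm

section WeightedIntegrals

variable {Q w g : ℝ → ℝ} {a b : ℝ}

lemma integral_mul_le_of_le_sq {φ : ℝ → ℝ} {M c : ℝ} (hab : a ≤ b)
    (hg : ContinuousOn g (Icc a b)) (hw : IntervalIntegrable w volume a b)
    (hw0 : ∀ x ∈ Ioo a b, 0 ≤ w x) (hφ0 : ∀ x ∈ Ioo a b, 0 ≤ φ x)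
    (hφ : ∀ x ∈ Ioo a b, φ x ≤ M * g x ^ 2 + c) :
    ∫ x in a..b, φ x * w x ≤ M * (∫ x in a..b, g x ^ 2 * w x) + c * ∫ x in a..b, w x := by
  have hgw : IntervalIntegrable (fun x => g x ^ 2 * w x) volume a b :=
    hw.continuousOn_mul (uIcc_of_le hab ▸ hg.pow 2)
  calc ∫ x in a..b, φ x * w x ≤ ∫ x in a..b, (M * (g x ^ 2 * w x) + c * w x) := by
        refine integral_mono_on_Ioo_of_nonneg hab ((hgw.const_mul M).add (hw.const_mul c))
          (fun x hx => mul_nonneg (hφ0 x hx) (hw0 x hx)) fun x hx => ?_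
        have := mul_le_mul_of_nonneg_right (hφ x hx) (hw0 x hx)
        linarith
    _ = M * (∫ x in a..b, g x ^ 2 * w x) + c * ∫ x in a..b, w x := by
        rw [integral_add (hgw.const_mul M) (hw.const_mul c), intervalIntegral.integral_const_mul,
          intervalIntegral.integral_const_mul]

lemma integral_le_of_le_add_deriv {Q' : ℝ → ℝ} {k : ℝ} (hab : a ≤ b)
    (hQ : ∀ x ∈ Icc a b, HasDerivAt Q (Q' x) x) (hmono : MonotoneOn Q (Icc a b))
    (hw0 : ∀ x ∈ Ioo a b, 0 ≤ w x) (hw : ∀ x ∈ Ioo a b, w x ≤ Q x + Q' x / k) :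
    ∫ x in a..b, w x ≤ Q b * (b - a) + (Q b - Q a) / k := by
  have hQc : ContinuousOn Q (uIcc a b) := fun x hx =>
    (hQ x (uIcc_of_le hab ▸ hx)).continuousAt.continuousWithinAt
  have hQ'int : IntervalIntegrable Q' volume a b := by
    refine intervalIntegrable_deriv_of_nonneg hQc (fun x hx => ?_) fun x hx => ?_
    all_goals rw [min_eq_left hab, max_eq_right hab] at hx
    exacts [hQ x (Ioo_subset_Icc_self hx),
      (hQ x (Ioo_subset_Icc_self hx)).nonneg_of_monotoneOn_Icc hmono hx]
  have hQ'_eq : ∫ x in a..b, Q' x = Q b - Q a :=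
    integral_eq_sub_of_hasDerivAt (fun x hx => hQ x (uIcc_of_le hab ▸ hx)) hQ'int
  have hQ_le : ∫ x in a..b, Q x ≤ Q b * (b - a) := by
    have := integral_mono_on (μ := volume) hab hQc.intervalIntegrable
      _root_.intervalIntegrable_const fun x hx => hmono hx ⟨hab, le_rfl⟩ hx.2
    simpa [mul_comm] using this
  calc ∫ x in a..b, w x ≤ ∫ x in a..b, (Q x + Q' x / k) :=
        integral_mono_on_Ioo_of_nonneg hab
          (hQc.intervalIntegrable.add (hQ'int.div_const k)) hw0 hw
    _ = (∫ x in a..b, Q x) + (Q b - Q a) / k := by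
        rw [integral_add hQc.intervalIntegrable (hQ'int.div_const k),
          intervalIntegral.integral_div, hQ'_eq]
    _ ≤ Q b * (b - a) + (Q b - Q a) / k := by linarith

lemma mul_integral_sq_le_integral_sq_mul (hab : a ≤ b) (hg : ContinuousOn g (Icc a b))
    (hw : IntervalIntegrable w volume a b) (hmono : MonotoneOn Q (Icc a b))
    (hQw : ∀ x ∈ Ioo a b, Q x ≤ w x) :
    Q a * ∫ x in a..b, g x ^ 2 ≤ ∫ x in a..b, g x ^ 2 * w x := by
  have hg2 : ContinuousOn (fun x => g x ^ 2) (uIcc a b) := uIcc_of_le hab ▸ hg.pow 2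
  rw [← intervalIntegral.integral_const_mul]
  refine integral_mono_on_of_le_Ioo hab (hg2.intervalIntegrable.const_mul _)
    (hw.continuousOn_mul hg2) fun x hx => ?_
  rw [mul_comm]
  exact mul_le_mul_of_nonneg_left
    ((hmono ⟨le_rfl, hab⟩ (Ioo_subset_Icc_self hx) hx.1.le).trans (hQw x hx)) (sq_nonneg _)

end WeightedIntegrals

lemma deriv_div_mem_Icc {V B S : ℝ → ℝ} {k q t : ℝ} (hk : 0 < k)
    (hV : DifferentiableAt ℝ V t) (hB : HasDerivAt B (S t) t) (hBt : 0 < B t)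
    (hkB : k * B t ≤ S t) (hQ : HasDerivAt (fun s => V s / B s) q t) (hq : 0 ≤ q) :
    deriv V t / S t ∈ Icc (V t / B t) (V t / B t + q / k) := by
  have hSt : 0 < S t := (mul_pos hk hBt).trans_le hkB
  have hq_eq : q = (deriv V t * B t - V t * S t) / B t ^ 2 :=
    hQ.unique (hV.hasDerivAt.div hB hBt.ne')
  have hw : deriv V t / S t = V t / B t + q * (B t / S t) := by
    rw [hq_eq]; field_simp; ring
  have hBS : B t / S t ≤ 1 / k := by
    rw [div_le_div_iff₀ hSt hk]; linarith
  rw [hw, div_eq_mul_one_div q k]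
  exact ⟨le_add_of_nonneg_right (mul_nonneg hq (by positivity)), by gcongr⟩

-- With `c = √(-κ)` and `m = n - 1` these are `S^κ_n` and `B^κ_n`.
noncomputable def sphereArea (c ω : ℝ) (m : ℕ) (t : ℝ) : ℝ := ω * (sinh (c * t) / c) ^ m

noncomputable def ballVolume (c ω : ℝ) (m : ℕ) (R : ℝ) : ℝ :=
  ∫ t in 0..R, sphereArea c ω m t

section SpaceForm

variable {c ω : ℝ} {m : ℕ}

lemma continuous_sphereArea : Continuous (sphereArea c ω m) := by
  unfold sphereArea; fun_prop

lemma sphereArea_pos (hc : 0 < c) (hω : 0 < ω) {t : ℝ} (ht : 0 < t) :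
    0 < sphereArea c ω m t :=
  mul_pos hω (pow_pos (div_pos (sinh_pos_iff.2 (mul_pos hc ht)) hc) m)

lemma hasDerivAt_sphereArea (hc : c ≠ 0) (t : ℝ) :
    HasDerivAt (sphereArea c ω m) (ω * (m * (sinh (c * t) / c) ^ (m - 1) * cosh (c * t))) t := by
  have h : HasDerivAt (fun t => sinh (c * t) / c) (cosh (c * t)) t := by
    refine (((hasDerivAt_id' t).const_mul c).sinh.div_const c).congr_deriv ?_
    field_simp
  exact (h.pow m).const_mul ω

lemma hasDerivAt_sphereArea_of_pos (hc : 0 < c) {t : ℝ} (ht : 0 < t) :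
    HasDerivAt (sphereArea c ω m) (m * c * coth (c * t) * sphereArea c ω m t) t := by
  refine (hasDerivAt_sphereArea hc.ne' t).congr_deriv ?_
  have hs : 0 < sinh (c * t) := sinh_pos_iff.2 (mul_pos hc ht)
  rcases m with _ | m
  · simp
  · simp only [sphereArea, coth, Nat.add_sub_cancel, pow_succ]
    push_cast
    field_simp

lemma mul_sphereArea_le_deriv (hc : 0 < c) (hω : 0 ≤ ω) {t : ℝ} (ht : 0 ≤ t) :
    m * c * sphereArea c ω m t ≤ ω * (m * (sinh (c * t) / c) ^ (m - 1) * cosh (c * t)) := by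
  have hS : 0 ≤ sinh (c * t) / c := div_nonneg (sinh_nonneg_iff.2 (by positivity)) hc.le
  rcases m with _ | m
  · simp
  · have h := mul_le_mul_of_nonneg_left (sinh_lt_cosh (c * t)).le
      (mul_nonneg hω (mul_nonneg (Nat.cast_nonneg (m + 1)) (pow_nonneg hS m)))
    simp only [sphereArea, Nat.add_sub_cancel, pow_succ]
    calc (↑(m + 1) : ℝ) * c * (ω * ((sinh (c * t) / c) ^ m * (sinh (c * t) / c)))
        = ω * (↑(m + 1) * (sinh (c * t) / c) ^ m) * sinh (c * t) := by field_simp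
      _ ≤ _ := by linarith

lemma hasDerivAt_ballVolume (R : ℝ) : HasDerivAt (ballVolume c ω m) (sphereArea c ω m R) R :=
  (continuous_sphereArea.integral_hasStrictDerivAt 0 R).hasDerivAt

lemma ballVolume_pos (hc : 0 < c) (hω : 0 < ω) {R : ℝ} (hR : 0 < R) :
    0 < ballVolume c ω m R :=
  intervalIntegral_pos_of_pos_on (continuous_sphereArea.intervalIntegrable 0 R)
    (fun _ ht => sphereArea_pos hc hω ht.1) hR

lemma mul_ballVolume_le (hc : 0 < c) (hω : 0 ≤ ω) {R : ℝ} (hR : 0 ≤ R) :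
    m * c * ballVolume c ω m R ≤ sphereArea c ω m R := by
  have h0 : 0 ≤ sphereArea c ω m 0 := by unfold sphereArea; positivity
  have := mul_integral_le_sub_of_mul_le_deriv (F := sphereArea c ω m) hR
    (fun t _ => hasDerivAt_sphereArea hc.ne' t)
    ((by fun_prop : Continuous _).intervalIntegrable 0 R)
    fun t ht => mul_sphereArea_le_deriv hc hω ht.1
  rw [ballVolume]
  linarith

end SpaceForm

noncomputable def testFun (S : ℝ → ℝ) (R s : ℝ) : ℝ :=
  sin (2 * π * (s - R / 2) / R) / √(S s)

lemma hasDerivAt_testFun {c ω : ℝ} {m : ℕ} (hc : 0 < c) (hω : 0 < ω) (R : ℝ) {s : ℝ}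
    (hs : 0 < s) :
    HasDerivAt (testFun (sphereArea c ω m) R)
      ((2 * π / R * cos (2 * π * (s - R / 2) / R) -
        sin (2 * π * (s - R / 2) / R) * (m * c / 2 * coth (c * s))) /
          √(sphereArea c ω m s)) s := by
  have hθ : HasDerivAt (fun s => 2 * π * (s - R / 2) / R) (2 * π / R) s := by
    simpa using (((hasDerivAt_id' s).sub_const (R / 2)).const_mul (2 * π)).div_const R
  have hS := sphereArea_pos (m := m) hc hω hs
  refine (hasDerivAt_div_sqrt hθ.sin (hasDerivAt_sphereArea_of_pos hc hs) hS).congr_deriv ?_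
  field_simp

lemma testFun_sq_mul {S : ℝ → ℝ} {R s : ℝ} (v : ℝ) (hS : 0 ≤ S s) :
    testFun S R s ^ 2 * v = sin (2 * π * (s - R / 2) / R) ^ 2 * (v / S s) := by
  rw [testFun, div_pow, sq_sqrt hS]
  ring

structure MonotoneVolumeRatio (c ω : ℝ) (m : ℕ) (V : ℝ → ℝ) : Prop where
  pos : ∀ s > 0, 0 < V s
  differentiableAt : ∀ s > 0, DifferentiableAt ℝ V s
  monotoneOn : MonotoneOn (fun s => V s / ballVolume c ω m s) (Ioi 0)

namespace MonotoneVolumeRatio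

variable {c ω : ℝ} {m : ℕ} {V : ℝ → ℝ}

lemma hasDerivAt_div (hc : 0 < c) (hω : 0 < ω) (hV : MonotoneVolumeRatio c ω m V) {t : ℝ}
    (ht : 0 < t) :
    HasDerivAt (fun s => V s / ballVolume c ω m s)
      (deriv (fun s => V s / ballVolume c ω m s) t) t :=
  ((hV.differentiableAt t ht).div (hasDerivAt_ballVolume t).differentiableAt
    (ballVolume_pos hc hω ht).ne').hasDerivAt

lemma deriv_div_sphereArea_mem_Icc (hc : 0 < c) (hω : 0 < ω) (hm : 1 ≤ m)
    (hV : MonotoneVolumeRatio c ω m V) {t : ℝ} (ht : 0 < t) :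
    deriv V t / sphereArea c ω m t ∈ Icc (V t / ballVolume c ω m t)
      (V t / ballVolume c ω m t + deriv (fun s => V s / ballVolume c ω m s) t / (m * c)) := by
  refine deriv_div_mem_Icc (by positivity) (hV.differentiableAt t ht) (hasDerivAt_ballVolume t)
    (ballVolume_pos hc hω ht) (mul_ballVolume_le hc hω.le ht.le) (hV.hasDerivAt_div hc hω ht) ?_
  rw [← derivWithin_of_isOpen isOpen_Ioi ht]
  exact hV.monotoneOn.derivWithin_nonneg

lemma deriv_pos (hc : 0 < c) (hω : 0 < ω) (hm : 1 ≤ m) (hV : MonotoneVolumeRatio c ω m V)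
    {t : ℝ} (ht : 0 < t) : 0 < deriv V t :=
  (div_pos_iff_of_pos_right (sphereArea_pos hc hω ht)).1
    ((div_pos (hV.pos t ht) (ballVolume_pos hc hω ht)).trans_le
      (hV.deriv_div_sphereArea_mem_Icc hc hω hm ht).1)

lemma intervalIntegrable_deriv_div_sphereArea (hc : 0 < c) (hω : 0 < ω) (hm : 1 ≤ m)
    (hV : MonotoneVolumeRatio c ω m V) {a b : ℝ} (ha : 0 < a) (hab : a ≤ b) :
    IntervalIntegrable (fun s => deriv V s / sphereArea c ω m s) volume a b := by
  have hpos : ∀ s ∈ uIcc a b, 0 < s := fun s hs => ha.trans_le (uIcc_of_le hab ▸ hs).1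
  have hV' : IntervalIntegrable (deriv V) volume a b := by
    refine intervalIntegrable_deriv_of_nonneg (g := V)
      (fun s hs => (hV.differentiableAt s (hpos s hs)).continuousAt.continuousWithinAt)
      (fun s hs => ?_) fun s hs => ?_
    all_goals replace hs := hpos s (Ioo_subset_Icc_self hs)
    exacts [(hV.differentiableAt s hs).hasDerivAt, (hV.deriv_pos hc hω hm hs).le]
  simpa only [div_eq_mul_inv, Pi.inv_apply] using hV'.mul_continuousOn
    (continuous_sphereArea.continuousOn.inv₀ fun s hs => (sphereArea_pos hc hω (hpos s hs)).ne')

lemma integral_deriv_div_sphereArea_le (hc : 0 < c) (hω : 0 < ω) (hm : 1 ≤ m)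
    (hV : MonotoneVolumeRatio c ω m V) {R : ℝ} (hR : 0 < R) :
    ∫ s in R / 2..R, deriv V s / sphereArea c ω m s ≤
      V R / ballVolume c ω m R * (R / 2 + 1 / (m * c)) := by
  have hpos : ∀ s ∈ Icc (R / 2) R, 0 < s := fun s hs => (half_pos hR).trans_le hs.1
  have h := integral_le_of_le_add_deriv (half_le_self hR.le)
    (fun s hs => hV.hasDerivAt_div hc hω (hpos s hs))
    (hV.monotoneOn.mono fun s hs => hpos s hs)
    (fun s hs => (div_pos (hV.deriv_pos hc hω hm (hpos s (Ioo_subset_Icc_self hs)))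
      (sphereArea_pos hc hω (hpos s (Ioo_subset_Icc_self hs)))).le)
    fun s hs => (hV.deriv_div_sphereArea_mem_Icc hc hω hm (hpos s (Ioo_subset_Icc_self hs))).2
  have hQ₀ : 0 ≤ V (R / 2) / ballVolume c ω m (R / 2) :=
    (div_pos (hV.pos _ (half_pos hR)) (ballVolume_pos hc hω (half_pos hR))).le
  calc _ ≤ _ := h
    _ ≤ V R / ballVolume c ω m R * (R - R / 2) + V R / ballVolume c ω m R / (m * c) := by
        gcongr; linarith
    _ = _ := by ring

lemma mul_le_integral_testFun_sq_mul (hc : 0 < c) (hω : 0 < ω) (hm : 1 ≤ m)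
    (hV : MonotoneVolumeRatio c ω m V) {R : ℝ} (hR : 0 < R) :
    V (R / 2) / ballVolume c ω m (R / 2) * (R / 4) ≤
      ∫ s in R / 2..R, testFun (sphereArea c ω m) R s ^ 2 * deriv V s := by
  have hhalf := half_le_self hR.le
  have hpos : ∀ s ∈ Icc (R / 2) R, 0 < s := fun s hs => (half_pos hR).trans_le hs.1
  rw [← integral_sin_sq_half_period hR.ne', integral_congr fun s hs => testFun_sq_mul (deriv V s)
    (sphereArea_pos hc hω (hpos s (uIcc_of_le hhalf ▸ hs))).le]
  exact mul_integral_sq_le_integral_sq_mul hhalf (by fun_prop)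
    (hV.intervalIntegrable_deriv_div_sphereArea hc hω hm (half_pos hR) hhalf)
    (hV.monotoneOn.mono fun s hs => hpos s hs)
    fun s hs => (hV.deriv_div_sphereArea_mem_Icc hc hω hm (hpos s (Ioo_subset_Icc_self hs))).1

lemma integral_deriv_testFun_sq_mul_le (hc : 0 < c) (hω : 0 < ω) (hm : 1 ≤ m)
    (hV : MonotoneVolumeRatio c ω m V) {R M : ℝ} (hR : 0 < R)
    (hM : ∀ s ∈ Icc (R / 2) R, m * c / 2 * coth (c * s) ≤ M) :
    ∫ s in R / 2..R, deriv (testFun (sphereArea c ω m) R) s ^ 2 * deriv V s ≤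
      M ^ 2 * (∫ s in R / 2..R, testFun (sphereArea c ω m) R s ^ 2 * deriv V s) +
        ((2 * π / R) ^ 2 + 2 * (2 * π / R) * M) *
          ∫ s in R / 2..R, deriv V s / sphereArea c ω m s := by
  have hhalf := half_le_self hR.le
  have hpos : ∀ s ∈ uIcc (R / 2) R, 0 < s := fun s hs =>
    (half_pos hR).trans_le (uIcc_of_le hhalf ▸ hs).1
  have hS : ∀ s ∈ uIcc (R / 2) R, 0 ≤ sphereArea c ω m s := fun s hs =>
    (sphereArea_pos hc hω (hpos s hs)).le
  rw [integral_congr fun s hs => testFun_sq_mul (deriv V s) (hS s hs),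
    integral_congr fun s hs => by
      rw [(hasDerivAt_testFun hc hω R (hpos s hs)).deriv, div_pow, sq_sqrt (hS s hs),
        div_mul_eq_mul_div, mul_div_assoc]]
  refine integral_mul_le_of_le_sq hhalf (by fun_prop)
    (hV.intervalIntegrable_deriv_div_sphereArea hc hω hm (half_pos hR) hhalf) (fun s hs => ?_)
    (fun s _ => sq_nonneg _) fun s hs => ?_
  all_goals have hs₀ : 0 < s := (half_pos hR).trans hs.1
  · exact (div_pos (hV.deriv_pos hc hω hm hs₀) (sphereArea_pos hc hω hs₀)).le
  · refine sq_sub_mul_le (abs_sin_le_one _) ?_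
      (by have := one_le_coth (mul_pos hc hs₀); positivity) (hM s (Ioo_subset_Icc_self hs))
    rw [abs_mul, abs_of_pos (by positivity : 0 < 2 * π / R)]
    exact mul_le_of_le_one_right (by positivity) (abs_cos_le_one _)

end MonotoneVolumeRatio

-- `m c coth (c R / 2) / 2` bounds the log-derivative `S' / (2 S)` of the sphere area on
-- `[R / 2, R]`, and `2 π / R` bounds the derivative of the sine factor of the test function.
noncomputable def quotientBound (c C : ℝ) (m : ℕ) (R : ℝ) : ℝ :=
  (m * c / 2 * coth (c * R / 2)) ^ 2 +
    ((2 * π / R) ^ 2 + 2 * (2 * π / R) * (m * c / 2 * coth (c * R / 2))) *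
      (C * (2 + 4 / (m * c * R)))

theorem MonotoneVolumeRatio.rayleighQuotient_testFun_mem_Icc {c ω C R : ℝ} {m : ℕ}
    {V : ℝ → ℝ} (hc : 0 < c) (hω : 0 < ω) (hm : 1 ≤ m) (hV : MonotoneVolumeRatio c ω m V)
    (hR : 0 < R)
    (hdoubling : V R / ballVolume c ω m R / (V (R / 2) / ballVolume c ω m (R / 2)) ≤ C) :
    (∫ s in R / 2..R, deriv (testFun (sphereArea c ω m) R) s ^ 2 * deriv V s) /
        (∫ s in R / 2..R, testFun (sphereArea c ω m) R s ^ 2 * deriv V s) ∈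
      Icc 0 (quotientBound c C m R) := by
  have hD := hV.mul_le_integral_testFun_sq_mul hc hω hm hR
  have hW := hV.integral_deriv_div_sphereArea_le hc hω hm hR
  have hN := hV.integral_deriv_testFun_sq_mul_le hc hω hm hR (M := m * c / 2 * coth (c * R / 2))
    fun s hs => by
      gcongr
      exact coth_le_coth (by positivity) (by nlinarith [hs.1])
  set Q := fun s => V s / ballVolume c ω m s
  set D := ∫ s in R / 2..R, testFun (sphereArea c ω m) R s ^ 2 * deriv V s
  have hQ₀ : 0 < Q (R / 2) :=
    div_pos (hV.pos _ (half_pos hR)) (ballVolume_pos hc hω (half_pos hR))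
  have hC : 0 < C := (div_pos (div_pos (hV.pos _ hR) (ballVolume_pos hc hω hR)) hQ₀).trans_le
    hdoubling
  have hDpos : 0 < D := (by positivity : 0 < Q (R / 2) * (R / 4)).trans_le hD
  have hWD : ∫ s in R / 2..R, deriv V s / sphereArea c ω m s ≤ C * (2 + 4 / (m * c * R)) * D :=
    calc _ ≤ Q R * (R / 2 + 1 / (m * c)) := hW
      _ ≤ C * Q (R / 2) * (R / 2 + 1 / (m * c)) := by
        gcongr
        exact (div_le_iff₀ hQ₀).1 hdoubling
      _ = C * (2 + 4 / (m * c * R)) * (Q (R / 2) * (R / 4)) := by field_simp; ring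
      _ ≤ C * (2 + 4 / (m * c * R)) * D := by gcongr
  refine ⟨div_nonneg (integral_nonneg (half_le_self hR.le) fun s hs =>
    mul_nonneg (sq_nonneg _) (hV.deriv_pos hc hω hm ((half_pos hR).trans_le hs.1)).le) hDpos.le,
    (div_le_iff₀ hDpos).2 ?_⟩
  have hcoth := one_le_coth (by positivity : 0 < c * R / 2)
  calc _ ≤ _ := hN
    _ ≤ (m * c / 2 * coth (c * R / 2)) ^ 2 * D +
        ((2 * π / R) ^ 2 + 2 * (2 * π / R) * (m * c / 2 * coth (c * R / 2))) *
          (C * (2 + 4 / (m * c * R)) * D) := by gcongr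
    _ = quotientBound c C m R * D := by rw [quotientBound]; ring

lemma tendsto_quotientBound {c C : ℝ} {m : ℕ} (hc : 0 < c) :
    Tendsto (quotientBound c C m) atTop (𝓝 ((m * c / 2) ^ 2)) := by
  have hcoth : Tendsto (fun R => coth (c * R / 2)) atTop (𝓝 1) :=
    tendsto_coth_atTop.comp ((tendsto_id.const_mul_atTop hc).atTop_div_const two_pos)
  have hinv : ∀ a : ℝ, Tendsto (fun R : ℝ => a / R) atTop (𝓝 0) := fun a =>
    tendsto_const_nhds.div_atTop tendsto_id
  have h := ((hcoth.const_mul (m * c / 2)).pow 2).add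
    ((((hinv (2 * π)).pow 2).add
      (((hinv (2 * π)).const_mul 2).mul (hcoth.const_mul (m * c / 2)))).mul
        (((hinv (4 / (m * c))).const_add 2).const_mul C))
  simp only [mul_one, ne_eq, OfNat.ofNat_ne_zero, not_false_eq_true, zero_pow, mul_zero,
    add_zero, zero_mul] at h
  refine h.congr fun R => ?_
  rw [quotientBound, div_div]

open Real in
/-- For n ≥ 2, κ < 0, ω_n > 0, C ≥ 1, V : (0,∞) → (0,∞)
differentiable with Q(s) := V(s)/B^κ_n(s) non-decreasing on (0, ∞) and
Q(R)/Q(R/2) < C for all R > 0 (extrinsic doubling property), and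
f_R(s) = sin(2π(s − R/2)/R)/(S^κ_n(s))^{1/2}:
limsup_{R → ∞} [∫_{R/2}^{R} f_R'(s)²·V'(s) ds / ∫_{R/2}^{R} f_R(s)²·V'(s) ds]
  ≤ −C·(n−1)²·κ/4. -/
theorem stmt_16 (n : ℕ) (hn : 2 ≤ n) (κ : ℝ) (hκ : κ < 0) (ω : ℝ) (hω : 0 < ω)
    (C : ℝ) (hC : 1 ≤ C)
    (S : ℝ → ℝ)
    (hS : ∀ t : ℝ, S t = Real.sinh (Real.sqrt (-κ) * t) / Real.sqrt (-κ))
    (Sn : ℝ → ℝ) (hSn : ∀ R : ℝ, Sn R = ω * (S R) ^ (n - 1))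
    (Bn : ℝ → ℝ) (hBn : ∀ R : ℝ, Bn R = ∫ s in (0:ℝ)..R, Sn s)
    (V : ℝ → ℝ) (hVpos : ∀ s > (0:ℝ), 0 < V s)
    (hVdiff : ∀ s > (0:ℝ), DifferentiableAt ℝ V s)
    (Q : ℝ → ℝ) (hQ : ∀ s : ℝ, Q s = V s / Bn s)
    (hQmono : MonotoneOn Q (Set.Ioi (0:ℝ)))
    (hQdoubling : ∀ R > (0:ℝ), Q R / Q (R / 2) < C)
    (f : ℝ → ℝ → ℝ)
    (hf : ∀ R s : ℝ, f R s =
        Real.sin (2 * π * (s - R / 2) / R) / Real.sqrt (Sn s)) :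
    Filter.limsup
        (fun R =>
          (∫ s in (R / 2)..R, (deriv (f R) s) ^ 2 * deriv V s) /
            (∫ s in (R / 2)..R, (f R s) ^ 2 * deriv V s))
        Filter.atTop ≤ -C * ((n : ℝ) - 1) ^ 2 * κ / 4 := by
  have hc : 0 < √(-κ) := sqrt_pos.2 (neg_pos.2 hκ)
  have hm : 1 ≤ n - 1 := by omega
  obtain rfl : Sn = sphereArea √(-κ) ω (n - 1) := funext fun t => by rw [hSn, hS]; rfl
  obtain rfl : Bn = ballVolume √(-κ) ω (n - 1) := funext hBn
  obtain rfl : Q = fun s => V s / ballVolume √(-κ) ω (n - 1) s := funext hQ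
  obtain rfl : f = testFun (sphereArea √(-κ) ω (n - 1)) := funext₂ hf
  have hbound : ∀ R > 0, _ ∈ Icc 0 (quotientBound √(-κ) C (n - 1) R) := fun R hR =>
    MonotoneVolumeRatio.rayleighQuotient_testFun_mem_Icc hc hω hm ⟨hVpos, hVdiff, hQmono⟩ hR
      (hQdoubling R hR).le
  have hlim := tendsto_quotientBound (C := C) (m := n - 1) hc
  calc limsup _ atTop ≤ limsup (quotientBound √(-κ) C (n - 1)) atTop :=
        limsup_le_limsup ((eventually_gt_atTop 0).mono fun R hR => (hbound R hR).2)
          (isCoboundedUnder_le_of_eventually_le atTop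
            ((eventually_gt_atTop 0).mono fun R hR => (hbound R hR).1))
          hlim.isBoundedUnder_le
    _ = ((n - 1 : ℕ) * √(-κ) / 2) ^ 2 := hlim.limsup_eq
    _ ≤ -C * ((n : ℝ) - 1) ^ 2 * κ / 4 := by
        rw [Nat.cast_sub (by omega), div_pow, mul_pow, sq_sqrt (neg_nonneg.2 hκ.le)]
        push_cast
        nlinarith [mul_nonneg (mul_nonneg (sq_nonneg ((n : ℝ) - 1)) (neg_nonneg.2 hκ.le))
          (sub_nonneg.2 hC)]
end
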